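/- Let u^n, u^{n+1} ∈ X_N (trigonometric polynomials of degree ≤ N with mean zero) satisfy (u^{n+1} - u^n)/τ = -νΔ²u^{n+1} + ΔΠ_N(f(u^n)) with f(u) = u³ - u, τ, ν > 0. Then ℰ(u^{n+1}) - ℰ(u^n) + (1/2 + √(2ν/τ)) ‖u^{n+1} - u^n‖₂² ≤ (3/2) max{‖u^n‖_∞², ‖u^{n+1}‖_∞²} · ‖u^{n+1} - u^n‖₂², where ℰ(u) = ∫ ( (ν/2)|∇u|² + (1/4)(u²-1)² ) dx. -/

import Mathlib

open MeasureTheory Real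

/-- Fundamental domain `[-1/2,1/2]^d` of the unit torus `𝕋^d`. -/
noncomputable def cube (d : ℕ) : Set (Fin d → ℝ) :=
  Set.univ.pi fun _ => Set.Icc (-(1 : ℝ) / 2) ((1 : ℝ) / 2)

/-- Euclidean norm of a lattice frequency `k ∈ ℤ^d`. -/
noncomputable def knorm {d : ℕ} (k : Fin d → ℤ) : ℝ :=
  Real.sqrt (∑ j, ((k j : ℝ)) ^ 2)

/-- The character `e^{2πik·x}`. -/
noncomputable def eK {d : ℕ} (k : Fin d → ℤ) (x : Fin d → ℝ) : ℂ :=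
  Complex.exp (2 * π * Complex.I * ((∑ j, (k j : ℝ) * x j : ℝ) : ℂ))

/-- The (real-valued) trigonometric polynomial with Fourier coefficients `a`. -/
noncomputable def fSum {d : ℕ} (a : (Fin d → ℤ) → ℂ) (x : Fin d → ℝ) : ℝ :=
  (∑' k : Fin d → ℤ, a k * eK k x).re

/-- The Ginzburg–Landau energy `ℰ(u) = ∫ (ν/2)|∇u|² + (1/4)(u²-1)²`, with the gradient
term expressed via Plancherel through the Fourier coefficients `a` of `u`. -/
noncomputable def energy (d : ℕ) (ν : ℝ) (a : (Fin d → ℤ) → ℂ) : ℝ :=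
  ν / 2 * ∑' k : Fin d → ℤ, (2 * π * knorm k) ^ 2 * ‖a k‖ ^ 2 +
    1 / 4 * ∫ x in cube d, ((fSum a x) ^ 2 - 1) ^ 2

/-!
Work mode by mode on the Fourier side. With `λ_k = (2π|k|)²` the symbol of `-Δ`, multiplying
the `k`-th equation of the scheme by `conj (b_k - a_k) / λ_k` (i.e. pairing it with
`(-Δ)⁻¹ (u^{n+1} - u^n)`) gives, for `δ_k = b_k - a_k` and the Fourier coefficient `c_k` of
`f(u^n)`, `‖δ_k‖² / (τ λ_k) + (ν/2) λ_k (‖b_k‖² - ‖a_k‖² + ‖δ_k‖²) + Re (conj δ_k · c_k) = 0`,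
and AM-GM bounds `‖δ_k‖² / (τ λ_k) + (ν/2) λ_k ‖δ_k‖²` below by `√(2ν/τ) ‖δ_k‖²`; the zero
mode is frozen by the scheme. Summing over `k`, Parseval turns the three sums into the gradient
part of the energy difference, `∫ f(u^n) (u^{n+1} - u^n)` and `‖u^{n+1} - u^n‖²`. The potential
part is controlled by the second-order Taylor expansion of `F(u) = (u² - 1)² / 4`, whose second
derivative `3u² - 1` is at most `3M² - 1` on the range of both functions.
-/

open ComplexConjugate

lemma eK_add {d : ℕ} (k l : Fin d → ℤ) (x : Fin d → ℝ) :
    eK (k + l) x = eK k x * eK l x := by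
  simp only [eK, ← Complex.exp_add, Pi.add_apply, Int.cast_add, add_mul, Finset.sum_add_distrib]
  push_cast
  ring_nf

lemma conj_eK {d : ℕ} (k : Fin d → ℤ) (x : Fin d → ℝ) : conj (eK k x) = eK (-k) x := by
  simp only [eK, ← Complex.exp_conj, map_mul, Complex.conj_I, Complex.conj_ofReal, map_ofNat,
    Pi.neg_apply, Int.cast_neg, neg_mul, Finset.sum_neg_distrib]
  push_cast
  ring_nf

lemma norm_eK {d : ℕ} (k : Fin d → ℤ) (x : Fin d → ℝ) : ‖eK k x‖ = 1 := by
  rw [eK, Complex.norm_exp]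
  simp

@[fun_prop]
lemma continuous_eK {d : ℕ} (k : Fin d → ℤ) : Continuous (eK k) := by
  unfold eK
  fun_prop

lemma integral_cexp_two_pi_int_mul (m : ℤ) :
    ∫ t in Set.Icc (-(1 : ℝ) / 2) (1 / 2), Complex.exp (2 * π * Complex.I * m * t) =
      if m = 0 then 1 else 0 := by
  rw [integral_Icc_eq_integral_Ioc, ← intervalIntegral.integral_of_le (by norm_num)]
  split_ifs with hm
  · simp [hm]
    norm_num
  have hc : 2 * π * Complex.I * m ≠ 0 := by simp [Real.pi_ne_zero, hm]
  rw [integral_exp_mul_complex hc, div_eq_zero_iff, sub_eq_zero]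
  left
  -- the endpoints differ by the full period `exp (2πim) = 1`
  have hperiod := Complex.exp_int_mul_two_pi_mul_I m
  calc Complex.exp (2 * π * Complex.I * m * ((1 / 2 : ℝ) : ℂ))
      = Complex.exp (m * (2 * π * Complex.I)) *
          Complex.exp (2 * π * Complex.I * m * ((-(1 : ℝ) / 2 : ℝ) : ℂ)) := by
        rw [← Complex.exp_add]; push_cast; ring_nf
    _ = _ := by rw [hperiod, one_mul]

lemma integral_eK {d : ℕ} (k : Fin d → ℤ) :
    ∫ x in cube d, eK k x = if k = 0 then 1 else 0 := by
  have hprod : ∀ x, eK k x = ∏ j, Complex.exp (2 * π * Complex.I * k j * x j) := by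
    intro x
    rw [eK, ← Complex.exp_sum]
    push_cast
    rw [Finset.mul_sum]
    ring_nf
  simp_rw [hprod]
  rw [cube, volume_pi, Measure.restrict_pi_pi, integral_fintype_prod_eq_prod
    (f := fun j (t : ℝ) => Complex.exp (2 * π * Complex.I * k j * t))]
  simp_rw [integral_cexp_two_pi_int_mul]
  split_ifs with hk
  · simp [hk]
  · obtain ⟨j, hj⟩ := Function.ne_iff.mp hk
    exact Finset.prod_eq_zero (Finset.mem_univ j) (if_neg hj)

lemma integral_eK_mul_eK_neg {d : ℕ} (k l : Fin d → ℤ) :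
    ∫ x in cube d, eK l x * eK (-k) x = if l = k then 1 else 0 := by
  simp_rw [← eK_add, integral_eK, ← sub_eq_add_neg, sub_eq_zero]

lemma integrableOn_cube {d : ℕ} {E : Type*} [NormedAddCommGroup E] {f : (Fin d → ℝ) → E}
    (hf : Continuous f) : IntegrableOn f (cube d) :=
  hf.continuousOn.integrableOn_compact (isCompact_univ_pi fun _ => isCompact_Icc)

section TrigPoly

variable {d : ℕ} {s : Finset (Fin d → ℤ)} {p q : (Fin d → ℤ) → ℂ}

lemma fSum_eq_re_sum (hp : ∀ k ∉ s, p k = 0) (x : Fin d → ℝ) :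
    fSum p x = (∑ k ∈ s, p k * eK k x).re := by
  rw [fSum, tsum_eq_sum fun k hk => by rw [hp k hk, zero_mul]]

lemma ofReal_fSum (hp : ∀ k ∉ s, p k = 0) (hpr : ∀ k, p (-k) = conj (p k)) (x : Fin d → ℝ) :
    (fSum p x : ℂ) = ∑ k ∈ s, p k * eK k x := by
  have hreal : conj (∑' k, p k * eK k x) = ∑' k, p k * eK k x := by
    simp_rw [Complex.conj_tsum, map_mul, conj_eK, ← hpr]
    exact (Equiv.neg _).tsum_eq fun k => p k * eK k x
  rw [fSum, Complex.conj_eq_iff_re.mp hreal, tsum_eq_sum fun k hk => by rw [hp k hk, zero_mul]]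

lemma ofReal_fSum_eq_sum_conj (hp : ∀ k ∉ s, p k = 0) (hpr : ∀ k, p (-k) = conj (p k))
    (x : Fin d → ℝ) : (fSum p x : ℂ) = ∑ k ∈ s, conj (p k) * eK (-k) x := by
  simpa [map_sum, conj_eK] using congrArg conj (ofReal_fSum hp hpr x)

lemma continuous_fSum (hp : ∀ k ∉ s, p k = 0) : Continuous (fSum p) := by
  rw [funext (fSum_eq_re_sum hp)]
  fun_prop

lemma abs_fSum_le (hp : ∀ k ∉ s, p k = 0) (x : Fin d → ℝ) : |fSum p x| ≤ ∑ k ∈ s, ‖p k‖ := by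
  rw [fSum_eq_re_sum hp]
  refine (Complex.abs_re_le_norm _).trans ((norm_sum_le _ _).trans_eq ?_)
  simp [norm_eK]

lemma fSum_sub (hp : ∀ k ∉ s, p k = 0) (hq : ∀ k ∉ s, q k = 0) (x : Fin d → ℝ) :
    fSum (p - q) x = fSum p x - fSum q x := by
  have hpq : ∀ k ∉ s, (p - q) k = 0 := fun k hk => by simp [hp k hk, hq k hk]
  simp only [fSum_eq_re_sum hpq, fSum_eq_re_sum hp, fSum_eq_re_sum hq, ← Complex.sub_re,
    ← Finset.sum_sub_distrib, Pi.sub_apply, sub_mul]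

lemma integral_fSum_mul_eK_neg (hp : ∀ k ∉ s, p k = 0) (hpr : ∀ k, p (-k) = conj (p k))
    (k : Fin d → ℤ) : ∫ x in cube d, (fSum p x : ℂ) * eK (-k) x = p k := by
  simp_rw [ofReal_fSum hp hpr, Finset.sum_mul, mul_assoc]
  rw [integral_finsetSum _ fun l _ => integrableOn_cube (by fun_prop)]
  simp_rw [integral_const_mul, integral_eK_mul_eK_neg, mul_ite, mul_one, mul_zero,
    Finset.sum_ite_eq']
  split_ifs with hk
  · rfl
  · exact (hp k hk).symm

lemma integral_mul_fSum {g : (Fin d → ℝ) → ℝ} (hg : Continuous g) (hq : ∀ k ∉ s, q k = 0)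
    (hqr : ∀ k, q (-k) = conj (q k)) :
    ((∫ x in cube d, g x * fSum q x : ℝ) : ℂ) =
      ∑ k ∈ s, conj (q k) * ∫ x in cube d, (g x : ℂ) * eK (-k) x := by
  rw [← integral_complex_ofReal]
  push_cast
  simp_rw [ofReal_fSum_eq_sum_conj hq hqr, Finset.mul_sum]
  rw [integral_finsetSum _ fun k _ => integrableOn_cube (by fun_prop)]
  refine Finset.sum_congr rfl fun k _ => ?_
  rw [← integral_const_mul]
  congr 1 with x
  ring

lemma integral_fSum_sq (hq : ∀ k ∉ s, q k = 0) (hqr : ∀ k, q (-k) = conj (q k)) :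
    ∫ x in cube d, fSum q x ^ 2 = ∑ k ∈ s, ‖q k‖ ^ 2 := by
  have h := integral_mul_fSum (continuous_fSum hq) hq hqr
  simp_rw [integral_fSum_mul_eK_neg hq hqr, Complex.conj_mul'] at h
  simp_rw [sq (fSum q _)]
  exact_mod_cast h

end TrigPoly

lemma sqrt_two_mul_div_le {ν τ l : ℝ} (hν : 0 ≤ ν) (hτ : 0 < τ) (hl : 0 < l) :
    √(2 * ν / τ) ≤ 1 / (τ * l) + ν / 2 * l := by
  refine Real.sqrt_le_iff.mpr ⟨by positivity, ?_⟩
  have h : (1 / (τ * l) + ν / 2 * l) ^ 2 = (1 / (τ * l) - ν / 2 * l) ^ 2 + 2 * ν / τ := by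
    field_simp
    ring
  nlinarith [sq_nonneg (1 / (τ * l) - ν / 2 * l)]

lemma re_conj_sub_mul (a b : ℂ) :
    (conj (b - a) * b).re = (‖b‖ ^ 2 - ‖a‖ ^ 2 + ‖b - a‖ ^ 2) / 2 := by
  simp only [Complex.sq_norm, Complex.normSq_apply, Complex.mul_re, Complex.conj_re,
    Complex.conj_im, Complex.sub_re, Complex.sub_im]
  ring

lemma mode_energy_le {ν τ r : ℝ} (hν : 0 ≤ ν) (hτ : 0 < τ) {a b c : ℂ}
    (h : (b - a) / τ = -(ν * (r ^ 4 : ℝ)) * b - ((r ^ 2 : ℝ) : ℂ) * c) :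
    ν / 2 * r ^ 2 * (‖b‖ ^ 2 - ‖a‖ ^ 2) + (conj (b - a) * c).re + √(2 * ν / τ) * ‖b - a‖ ^ 2
      ≤ 0 := by
  rcases eq_or_ne r 0 with rfl | hr
  · obtain rfl : b = a := by simpa [hτ.ne', sub_eq_zero] using h
    simp
  have hl : 0 < r ^ 2 := by positivity
  have hpair : ((‖b - a‖ ^ 2 / τ : ℝ) : ℂ) =
      ((-(ν * r ^ 4) : ℝ) : ℂ) * (conj (b - a) * b) - ((r ^ 2 : ℝ) : ℂ) * (conj (b - a) * c) := by
    have hnorm := Complex.conj_mul' (b - a)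
    push_cast at h ⊢
    linear_combination conj (b - a) * h - (1 / (τ : ℂ)) * hnorm
  have hre := congrArg Complex.re hpair
  simp only [Complex.ofReal_re, Complex.sub_re, Complex.re_ofReal_mul,
    re_conj_sub_mul] at hre
  have hc : (conj (b - a) * c).re =
      -(‖b - a‖ ^ 2 / (τ * r ^ 2)) - ν / 2 * r ^ 2 * (‖b‖ ^ 2 - ‖a‖ ^ 2 + ‖b - a‖ ^ 2) := by
    field_simp at hre ⊢
    linarith
  have hamgm : √(2 * ν / τ) * ‖b - a‖ ^ 2 ≤
      ‖b - a‖ ^ 2 / (τ * r ^ 2) + ν / 2 * r ^ 2 * ‖b - a‖ ^ 2 :=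
    (mul_le_mul_of_nonneg_right (sqrt_two_mul_div_le hν hτ hl) (sq_nonneg _)).trans_eq (by ring)
  rw [hc]
  linarith

lemma sum_mode_energy_le {ι : Type*} {s : Finset ι} {ν τ : ℝ} (hν : 0 ≤ ν) (hτ : 0 < τ)
    {r : ι → ℝ} {a b c : ι → ℂ}
    (h : ∀ k ∈ s, (b k - a k) / τ = -(ν * (r k ^ 4 : ℝ)) * b k - ((r k ^ 2 : ℝ) : ℂ) * c k) :
    ν / 2 * (∑ k ∈ s, r k ^ 2 * ‖b k‖ ^ 2 - ∑ k ∈ s, r k ^ 2 * ‖a k‖ ^ 2) +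
        (∑ k ∈ s, conj (b k - a k) * c k).re + √(2 * ν / τ) * ∑ k ∈ s, ‖b k - a k‖ ^ 2 ≤ 0 := by
  calc _ = ∑ k ∈ s, (ν / 2 * r k ^ 2 * (‖b k‖ ^ 2 - ‖a k‖ ^ 2) + (conj (b k - a k) * c k).re +
          √(2 * ν / τ) * ‖b k - a k‖ ^ 2) := by
        simp only [Complex.re_sum, Finset.mul_sum, ← Finset.sum_sub_distrib,
          ← Finset.sum_add_distrib]
        exact Finset.sum_congr rfl fun k _ => by ring
    _ ≤ 0 := Finset.sum_nonpos fun k hk => mode_energy_le hν hτ (h k hk)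

lemma doubleWell_sub_le {u v M : ℝ} (hu : u ^ 2 ≤ M ^ 2) (hv : v ^ 2 ≤ M ^ 2) :
    (v ^ 2 - 1) ^ 2 / 4 - (u ^ 2 - 1) ^ 2 / 4 ≤
      (u ^ 3 - u) * (v - u) + (3 / 2 * M ^ 2 - 1 / 2) * (v - u) ^ 2 := by
  -- the exact remainder is `(v - u) ^ 2 * (2 * u ^ 2 + v ^ 2 - (v - u) ^ 2 / 2 - 1) / 2`
  nlinarith [mul_nonneg (sq_nonneg (v - u)) (sub_nonneg.mpr hv),
    mul_nonneg (sq_nonneg (v - u)) (sub_nonneg.mpr hu), sq_nonneg ((v - u) * (v - u))]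

lemma integral_doubleWell_sub_le {d : ℕ} {u v : (Fin d → ℝ) → ℝ} (hu : Continuous u)
    (hv : Continuous v) {M : ℝ} (huM : ∀ x, u x ^ 2 ≤ M ^ 2) (hvM : ∀ x, v x ^ 2 ≤ M ^ 2) :
    1 / 4 * (∫ x in cube d, (v x ^ 2 - 1) ^ 2) - 1 / 4 * (∫ x in cube d, (u x ^ 2 - 1) ^ 2) ≤
      (∫ x in cube d, (u x ^ 3 - u x) * (v x - u x)) +
        (3 / 2 * M ^ 2 - 1 / 2) * ∫ x in cube d, (v x - u x) ^ 2 := by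
  have h := setIntegral_mono (integrableOn_cube (by fun_prop)) (integrableOn_cube (by fun_prop))
    fun x => doubleWell_sub_le (huM x) (hvM x)
  rw [integral_sub (integrableOn_cube (by fun_prop)) (integrableOn_cube (by fun_prop)),
    integral_add (integrableOn_cube (by fun_prop)) (integrableOn_cube (by fun_prop)),
    integral_div, integral_div, integral_const_mul] at h
  linarith

lemma energy_eq_sum {d : ℕ} {s : Finset (Fin d → ℤ)} {p : (Fin d → ℤ) → ℂ}
    (hp : ∀ k ∉ s, p k = 0) (ν : ℝ) :
    energy d ν p = ν / 2 * ∑ k ∈ s, (2 * π * knorm k) ^ 2 * ‖p k‖ ^ 2 +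
      1 / 4 * ∫ x in cube d, (fSum p x ^ 2 - 1) ^ 2 := by
  rw [energy, tsum_eq_sum fun k hk => by simp [hp k hk]]

lemma sq_fSum_le_sq {d : ℕ} {s : Finset (Fin d → ℤ)} {p : (Fin d → ℤ) → ℂ}
    (hp : ∀ k ∉ s, p k = 0) {M : ℝ} (hM : ⨆ y, |fSum p y| ≤ M) (x : Fin d → ℝ) :
    fSum p x ^ 2 ≤ M ^ 2 := by
  have hbdd : BddAbove (Set.range fun y => |fSum p y|) :=
    ⟨∑ k ∈ s, ‖p k‖, by rintro _ ⟨y, rfl⟩; exact abs_fSum_le hp y⟩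
  exact sq_le_sq.mpr (((le_ciSup hbdd x).trans hM).trans (le_abs_self M))

noncomputable def freqBox (d N : ℕ) : Finset (Fin d → ℤ) :=
  Fintype.piFinset fun _ => Finset.Icc (-(N : ℤ)) N

lemma mem_freqBox {d N : ℕ} {k : Fin d → ℤ} : k ∈ freqBox d N ↔ ∀ j, |k j| ≤ (N : ℤ) := by
  simp [freqBox, abs_le]

theorem stmt12_general (d : ℕ) (N : ℕ)
    (ν τ : ℝ) (hν : 0 < ν) (hτ : 0 < τ)
    (a b : (Fin d → ℤ) → ℂ)
    (ha_supp : ∀ k, ¬(∀ j, |k j| ≤ (N : ℤ)) → a k = 0)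
    (hb_supp : ∀ k, ¬(∀ j, |k j| ≤ (N : ℤ)) → b k = 0)
    (ha_real : ∀ k, a (-k) = starRingEnd ℂ (a k))
    (hb_real : ∀ k, b (-k) = starRingEnd ℂ (b k))
    (hscheme : ∀ k : Fin d → ℤ, (∀ j, |k j| ≤ (N : ℤ)) →
      (b k - a k) / (τ : ℂ) =
        -((ν : ℂ) * ((2 * π * knorm k) ^ 4 : ℝ)) * b k -
          (((2 * π * knorm k) ^ 2 : ℝ) : ℂ) *
            ∫ x in cube d, (((fSum a x) ^ 3 - fSum a x : ℝ) : ℂ) * eK (-k) x) :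
    energy d ν b - energy d ν a +
        (1 / 2 + Real.sqrt (2 * ν / τ)) * ∫ x in cube d, (fSum b x - fSum a x) ^ 2 ≤
      3 / 2 * (max (⨆ x : Fin d → ℝ, |fSum a x|) (⨆ x : Fin d → ℝ, |fSum b x|)) ^ 2 *
        ∫ x in cube d, (fSum b x - fSum a x) ^ 2 := by
  have ha : ∀ k ∉ freqBox d N, a k = 0 := fun k hk => ha_supp k (mt mem_freqBox.mpr hk)
  have hb : ∀ k ∉ freqBox d N, b k = 0 := fun k hk => hb_supp k (mt mem_freqBox.mpr hk)
  have hδ : ∀ k ∉ freqBox d N, (b - a) k = 0 := fun k hk => by simp [ha k hk, hb k hk]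
  have hδ_real : ∀ k, (b - a) (-k) = conj ((b - a) k) := fun k => by simp [ha_real, hb_real]
  have hdiff : ∀ x, fSum b x - fSum a x = fSum (b - a) x := fun x => (fSum_sub hb ha x).symm
  have huM := sq_fSum_le_sq ha (le_max_left (⨆ x, |fSum a x|) (⨆ x, |fSum b x|))
  have hvM := sq_fSum_le_sq hb (le_max_right (⨆ x, |fSum a x|) (⨆ x, |fSum b x|))
  have hmodes := sum_mode_energy_le hν.le hτ fun k hk => hscheme k (mem_freqBox.mp hk)
  have hpair := integral_mul_fSum (g := fun x => fSum a x ^ 3 - fSum a x)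
    (((continuous_fSum ha).pow 3).sub (continuous_fSum ha)) hδ hδ_real
  have hL2 := integral_fSum_sq hδ hδ_real
  simp only [Pi.sub_apply, ← hdiff] at hpair hL2
  rw [← hpair, Complex.ofReal_re, ← hL2] at hmodes
  have htaylor := integral_doubleWell_sub_le (continuous_fSum ha) (continuous_fSum hb) huM hvM
  rw [energy_eq_sum hb, energy_eq_sum ha]
  linarith

/-- discrete energy estimate for one step of the semi-implicit scheme
`(u^{n+1}-u^n)/τ = -νΔ²u^{n+1} + ΔΠ_N f(u^n)`, `f(u)=u³-u`, for mean-zero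
`u^n, u^{n+1} ∈ X_N` (represented on the Fourier side by coefficients `a`, `b`
supported in `|k|_∞ ≤ N`):
`ℰ(u^{n+1}) - ℰ(u^n) + (1/2 + √(2ν/τ))‖u^{n+1}-u^n‖₂²
  ≤ (3/2) max{‖u^n‖_∞², ‖u^{n+1}‖_∞²} ‖u^{n+1}-u^n‖₂²`. -/
theorem stmt12 (d : ℕ) (hd1 : 1 ≤ d) (hd : d ≤ 3) (N : ℕ) (hN : 2 ≤ N)
    (ν τ : ℝ) (hν : 0 < ν) (hτ : 0 < τ)
    (a b : (Fin d → ℤ) → ℂ)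
    (ha_supp : ∀ k, ¬(∀ j, |k j| ≤ (N : ℤ)) → a k = 0)
    (hb_supp : ∀ k, ¬(∀ j, |k j| ≤ (N : ℤ)) → b k = 0)
    (ha0 : a 0 = 0) (hb0 : b 0 = 0)
    (ha_real : ∀ k, a (-k) = starRingEnd ℂ (a k))
    (hb_real : ∀ k, b (-k) = starRingEnd ℂ (b k))
    (hscheme : ∀ k : Fin d → ℤ, (∀ j, |k j| ≤ (N : ℤ)) →
      (b k - a k) / (τ : ℂ) =
        -((ν : ℂ) * ((2 * π * knorm k) ^ 4 : ℝ)) * b k -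
          (((2 * π * knorm k) ^ 2 : ℝ) : ℂ) *
            ∫ x in cube d, (((fSum a x) ^ 3 - fSum a x : ℝ) : ℂ) * eK (-k) x) :
    energy d ν b - energy d ν a +
        (1 / 2 + Real.sqrt (2 * ν / τ)) * ∫ x in cube d, (fSum b x - fSum a x) ^ 2 ≤
      3 / 2 * (max (⨆ x : Fin d → ℝ, |fSum a x|) (⨆ x : Fin d → ℝ, |fSum b x|)) ^ 2 *
        ∫ x in cube d, (fSum b x - fSum a x) ^ 2 :=
  stmt12_general d N ν τ hν hτ a b ha_supp hb_supp ha_real hb_real hscheme
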